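/- arXiv:2209.11597 — 4 statements merged into one kernel-verified Lean document; each statement's English description precedes it below -/
import Mathlib

section
/- Let p ∈ ℝ with p ≠ 0 and p ≠ 1, let I ⊆ ℝ be an open interval, and let κ : I → ℝ be a smooth positive function satisfying the Euler–Lagrange equation p·(d²/ds²)(κ^(p−1)) + (p−1)·κ^(p+1) + p·κ^(p−1) = 0 on I. Then the function s ↦ p²(p−1)²·κ(s)^(2(p−2))·(κ'(s))² + (p−1)²·κ(s)^(2p) + p²·κ(s)^(2(p−1)) is constant on I, and this constant is strictly positive. -/
open Real Set

/-- For `p ≠ 0, 1` and a smooth positive solution `κ` of the Euler–Lagrange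
equation `p·(κ^(p−1))'' + (p−1)·κ^(p+1) + p·κ^(p−1) = 0` on an open interval `I`, the quantity
`p²(p−1)²·κ^(2(p−2))·(κ')² + (p−1)²·κ^(2p) + p²·κ^(2(p−1))` is a (strictly positive) constant. -/
theorem pElastic_first_integral (p : ℝ) (hp0 : p ≠ 0) (hp1 : p ≠ 1)
    (I : Set ℝ) (hIopen : IsOpen I) (hIinterval : I.OrdConnected)
    (κ : ℝ → ℝ) (hsmooth : ContDiffOn ℝ (⊤ : ℕ∞) κ I) (hpos : ∀ s ∈ I, 0 < κ s)
    (hEL : ∀ s ∈ I,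
      p * deriv (deriv fun t => κ t ^ (p - 1)) s
        + (p - 1) * κ s ^ (p + 1) + p * κ s ^ (p - 1) = 0) :
    ∃ a : ℝ, 0 < a ∧ ∀ s ∈ I,
      p ^ 2 * (p - 1) ^ 2 * κ s ^ (2 * (p - 2)) * (deriv κ s) ^ 2
        + (p - 1) ^ 2 * κ s ^ (2 * p) + p ^ 2 * κ s ^ (2 * (p - 1)) = a := by
  set E : ℝ → ℝ := fun t =>
      p ^ 2 * (p - 1) ^ 2 * κ t ^ (2 * (p - 2)) * (deriv κ t) ^ 2
        + (p - 1) ^ 2 * κ t ^ (2 * p) + p ^ 2 * κ t ^ (2 * (p - 1)) with hE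
  have hκ' : ContDiffOn ℝ (⊤ : ℕ∞) (deriv κ) I := hsmooth.deriv_of_isOpen hIopen (by simp)
  have hder : ∀ t ∈ I, HasDerivAt κ (deriv κ t) t := fun t ht =>
    (((hsmooth t ht).contDiffAt (hIopen.mem_nhds ht)).differentiableAt (by simp)).hasDerivAt
  have hder' : ∀ t ∈ I, HasDerivAt (deriv κ) (deriv (deriv κ) t) t := fun t ht =>
    (((hκ' t ht).contDiffAt (hIopen.mem_nhds ht)).differentiableAt (by simp)).hasDerivAt
  have key : ∀ s ∈ I, HasDerivAt E 0 s := by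
    intro s hs
    have hk : 0 < κ s := hpos s hs
    have h1 := hder s hs
    have h2 := hder' s hs
    -- the first derivative of κ^(p-1) equals (p-1) * (κ^(p-2) * κ') near s
    have hev : deriv (fun t => κ t ^ (p - 1)) =ᶠ[nhds s]
        fun t => (p - 1) * (κ t ^ (p - 2) * deriv κ t) := by
      filter_upwards [hIopen.mem_nhds hs] with t ht
      have h3 : HasDerivAt (fun u => κ u ^ (p - 1))
          (deriv κ t * (p - 1) * κ t ^ (p - 1 - 1)) t :=
        (hder t ht).rpow_const (Or.inl (hpos t ht).ne')
      rw [h3.deriv]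
      have : p - 1 - 1 = p - 2 := by ring
      rw [this]; ring
    -- second derivative of κ^(p-1) at s
    have h3 : HasDerivAt (fun u => κ u ^ (p - 2))
        (deriv κ s * (p - 2) * κ s ^ (p - 2 - 1)) s := h1.rpow_const (Or.inl hk.ne')
    have hg : HasDerivAt (fun t => (p - 1) * (κ t ^ (p - 2) * deriv κ t))
        ((p - 1) * (deriv κ s * (p - 2) * κ s ^ (p - 2 - 1) * deriv κ s
          + κ s ^ (p - 2) * deriv (deriv κ) s)) s := (h3.mul h2).const_mul (p - 1)
    have hdd : deriv (deriv fun t => κ t ^ (p - 1)) s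
        = (p - 1) * (deriv κ s * (p - 2) * κ s ^ (p - 2 - 1) * deriv κ s
          + κ s ^ (p - 2) * deriv (deriv κ) s) := by
      rw [hev.deriv_eq]; exact hg.deriv
    have hEL' := hEL s hs
    rw [hdd] at hEL'
    -- derivative of E at s
    have hA : HasDerivAt (fun t => κ t ^ (2 * (p - 2)))
        (deriv κ s * (2 * (p - 2)) * κ s ^ (2 * (p - 2) - 1)) s :=
      h1.rpow_const (Or.inl hk.ne')
    have hB : HasDerivAt (fun t => κ t ^ (2 * p))
        (deriv κ s * (2 * p) * κ s ^ (2 * p - 1)) s := h1.rpow_const (Or.inl hk.ne')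
    have hC : HasDerivAt (fun t => κ t ^ (2 * (p - 1)))
        (deriv κ s * (2 * (p - 1)) * κ s ^ (2 * (p - 1) - 1)) s :=
      h1.rpow_const (Or.inl hk.ne')
    have hD : HasDerivAt (fun t => (deriv κ t) ^ 2)
        (((2 : ℕ) : ℝ) * deriv κ s ^ (2 - 1) * deriv (deriv κ) s) s := h2.pow 2
    have hEderiv : HasDerivAt E
        ((p ^ 2 * (p - 1) ^ 2 * (deriv κ s * (2 * (p - 2)) * κ s ^ (2 * (p - 2) - 1))
            * (deriv κ s) ^ 2
          + p ^ 2 * (p - 1) ^ 2 * κ s ^ (2 * (p - 2))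
            * (((2 : ℕ) : ℝ) * deriv κ s ^ (2 - 1) * deriv (deriv κ) s))
          + (p - 1) ^ 2 * (deriv κ s * (2 * p) * κ s ^ (2 * p - 1))
          + p ^ 2 * (deriv κ s * (2 * (p - 1)) * κ s ^ (2 * (p - 1) - 1))) s := by
      exact (((hA.const_mul (p ^ 2 * (p - 1) ^ 2)).mul hD).add
        (hB.const_mul ((p - 1) ^ 2))).add (hC.const_mul (p ^ 2))
    -- rewrite all rpow exponents in terms of X := κ s ^ (p-3) and k := κ s
    have rpadd : ∀ q r : ℝ, κ s ^ (q + r) = κ s ^ q * κ s ^ r := fun q r =>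
      Real.rpow_add hk q r
    have e0 : κ s ^ (p - 2 - 1) = κ s ^ (p - 3) := by rw [show p - 2 - 1 = p - 3 by ring]
    have e1 : κ s ^ (p - 2) = κ s ^ (p - 3) * κ s := by
      rw [show p - 2 = (p - 3) + 1 by ring, rpadd, Real.rpow_one]
    have e2 : κ s ^ (p - 1) = κ s ^ (p - 3) * κ s ^ (2 : ℕ) := by
      rw [show p - 1 = (p - 3) + ((2 : ℕ) : ℝ) by push_cast; ring, rpadd, Real.rpow_natCast]
    have e3 : κ s ^ (p + 1) = κ s ^ (p - 3) * κ s ^ (4 : ℕ) := by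
      rw [show p + 1 = (p - 3) + ((4 : ℕ) : ℝ) by push_cast; ring, rpadd, Real.rpow_natCast]
    have e4 : κ s ^ (2 * (p - 2) - 1) = κ s ^ (p - 3) * κ s ^ (p - 3) * κ s := by
      rw [show 2 * (p - 2) - 1 = (p - 3) + ((p - 3) + 1) by ring, rpadd, rpadd,
        Real.rpow_one, mul_assoc]
    have e5 : κ s ^ (2 * (p - 2)) = κ s ^ (p - 3) * κ s ^ (p - 3) * κ s ^ (2 : ℕ) := by
      rw [show 2 * (p - 2) = (p - 3) + ((p - 3) + ((2 : ℕ) : ℝ)) by (push_cast; ring), rpadd, rpadd,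
        Real.rpow_natCast, mul_assoc]
    have e6 : κ s ^ (2 * p - 1) = κ s ^ (p - 3) * κ s ^ (p - 3) * κ s ^ (5 : ℕ) := by
      rw [show 2 * p - 1 = (p - 3) + ((p - 3) + ((5 : ℕ) : ℝ)) by (push_cast; ring), rpadd, rpadd,
        Real.rpow_natCast, mul_assoc]
    have e7 : κ s ^ (2 * (p - 1) - 1) = κ s ^ (p - 3) * κ s ^ (p - 3) * κ s ^ (3 : ℕ) := by
      rw [show 2 * (p - 1) - 1 = (p - 3) + ((p - 3) + ((3 : ℕ) : ℝ)) by (push_cast; ring), rpadd, rpadd,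
        Real.rpow_natCast, mul_assoc]
    convert hEderiv using 1
    rw [e0, e1, e2, e3] at hEL'
    rw [e4, e5, e6, e7]
    linear_combination (-(2 * p * (p - 1) * κ s ^ (p - 3) * κ s * deriv κ s)) * hEL'
  rcases I.eq_empty_or_nonempty with hIe | ⟨s₀, hs₀⟩
  · exact ⟨1, one_pos, by simp [hIe]⟩
  · have hconv : Convex ℝ I := convex_iff_ordConnected.mpr hIinterval
    have hdiffOn : DifferentiableOn ℝ E I := fun x hx =>
      ((key x hx).differentiableAt).differentiableWithinAt
    have hfd : ∀ x ∈ I, fderivWithin ℝ E I x = 0 := by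
      intro x hx
      rw [fderivWithin_of_isOpen hIopen hx, (key x hx).hasFDerivAt.fderiv]
      ext
      simp
    refine ⟨E s₀, ?_, fun s hs => hconv.is_const_of_fderivWithin_eq_zero hdiffOn hfd hs hs₀⟩
    have hk : 0 < κ s₀ := hpos s₀ hs₀
    have t1 : 0 ≤ p ^ 2 * (p - 1) ^ 2 * κ s₀ ^ (2 * (p - 2)) * (deriv κ s₀) ^ 2 := by
      have := (Real.rpow_pos_of_pos hk (2 * (p - 2))).le
      positivity
    have t2 : 0 ≤ (p - 1) ^ 2 * κ s₀ ^ (2 * p) := by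
      have := (Real.rpow_pos_of_pos hk (2 * p)).le
      positivity
    have t3 : 0 < p ^ 2 * κ s₀ ^ (2 * (p - 1)) := by
      have h2 : 0 < κ s₀ ^ (2 * (p - 1)) := Real.rpow_pos_of_pos hk _
      positivity
    simp only [hE]
    linarith
end

section
/- Fix p ∈ (0,1). For a > a_* := p^p·(1−p)^(1−p), let β(a) < α(a) denote the two positive roots of Q_{p,a}, and define Λ_p(a) := 2p(1−p)²·√a · ∫_{β(a)}^{α(a)} x^(1−p) / ((a·x^(2(1−p)) − p²)·√(Q_{p,a}(x))) dx, where the (improper) integral converges. Then the function Λ_p : (a_*, ∞) → ℝ is continuous and takes only positive values. -/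
open Real Set MeasureTheory intervalIntegral

/-- The function `Q_{p,a}(x) = a·x^(2(1−p)) − (1−p)²·x² − p²`. -/
noncomputable def Qfun (p a x : ℝ) : ℝ :=
  a * x ^ (2 * (1 - p)) - (1 - p) ^ 2 * x ^ 2 - p ^ 2

/-- The angular progression of the `p`-elastic curve with first-integral constant `a` over one
period of its curvature, where `β a < α a` are the two positive roots of `Q_{p,a}`:
`Λ_p(a) = 2p(1−p)²·√a · ∫_{β(a)}^{α(a)} x^(1−p)/((a·x^(2(1−p)) − p²)·√(Q_{p,a}(x))) dx`. -/
noncomputable def Lam (p : ℝ) (β α : ℝ → ℝ) (a : ℝ) : ℝ :=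
  2 * p * (1 - p) ^ 2 * Real.sqrt a *
    ∫ x in β a..α a,
      x ^ (1 - p) / ((a * x ^ (2 * (1 - p)) - p ^ 2) * Real.sqrt (Qfun p a x))

/-!
Since `Q_{p,a}(x) = x^{2(1-p)} (a - ψ(x))` with `ψ(x) = (1-p)² x^{2p} + p² x^{2p-2}`, the roots
`β(a) < α(a)` solve `ψ = a`. As `ψ` decreases strictly up to `x₀ = √(p/(1-p))` and increases
after it, `β` decreases and `α` increases with `a`, and `|ψ'|` is bounded below near the roots.
The integrand is at most `1 / ((1-p)² x² √(a - ψ(x)))`, so near a root it is dominated by a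
multiple of the derivative of `√(a - ψ)`. This gives convergence, and shows that for `b < a` the
integrals over `[β(a), α(a)]` and `[β(b), α(b)]` differ by `O(√(a - b))`, locally uniformly in
`a`. On the fixed interval `[β(b), α(b)]` the integral is continuous in `a` by dominated
convergence, so `Λ_p` is a locally uniform limit of continuous functions. Positivity is clear.
-/

namespace PElastic

variable {p a b s t x : ℝ}

noncomputable def psi (p x : ℝ) : ℝ :=
  (1 - p) ^ 2 * x ^ (2 * p) + p ^ 2 * x ^ (2 * p - 2)

noncomputable def psiDeriv (p x : ℝ) : ℝ :=
  2 * p * (1 - p) * x ^ (2 * p - 3) * ((1 - p) * x ^ 2 - p)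

noncomputable def criticalPoint (p : ℝ) : ℝ := √(p / (1 - p))

noncomputable def integrand (p a x : ℝ) : ℝ :=
  x ^ (1 - p) / ((a * x ^ (2 * (1 - p)) - p ^ 2) * √(Qfun p a x))

theorem Qfun_eq_mul_sub_psi (hx : 0 < x) :
    Qfun p a x = x ^ (2 * (1 - p)) * (a - psi p x) := by
  have h₁ : x ^ (2 * (1 - p)) * x ^ (2 * p) = x ^ 2 := by
    rw [← rpow_add hx, ← rpow_natCast]; congr 1; push_cast; ring
  have h₂ : x ^ (2 * (1 - p)) * x ^ (2 * p - 2) = 1 := by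
    rw [← rpow_add hx, show 2 * (1 - p) + (2 * p - 2) = 0 by ring, rpow_zero]
  simp only [Qfun, psi]
  linear_combination (1 - p) ^ 2 * h₁ + p ^ 2 * h₂

theorem hasDerivAt_psi (hx : 0 < x) : HasDerivAt (psi p) (psiDeriv p x) x := by
  have h := ((hasDerivAt_rpow_const (p := 2 * p) (Or.inl hx.ne')).const_mul ((1 - p) ^ 2)).add
    ((hasDerivAt_rpow_const (p := 2 * p - 2) (Or.inl hx.ne')).const_mul (p ^ 2))
  refine HasDerivAt.congr_deriv (f := psi p) h ?_
  have h₁ : x ^ (2 * p - 1) = x ^ (2 * p - 3) * x ^ 2 := by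
    rw [← rpow_natCast, ← rpow_add hx]; congr 1; push_cast; ring
  simp only [psiDeriv, h₁, show 2 * p - 2 - 1 = 2 * p - 3 by ring]
  ring

theorem continuousAt_psiDeriv (hx : 0 < x) : ContinuousAt (psiDeriv p) x := by
  unfold psiDeriv
  fun_prop (disch := exact Or.inl hx.ne')

theorem criticalPoint_pos (hp : p ∈ Ioo 0 1) : 0 < criticalPoint p :=
  sqrt_pos.2 (div_pos hp.1 (sub_pos.2 hp.2))

theorem psiDeriv_neg (hp : p ∈ Ioo 0 1) (hx : 0 < x) (hxc : x < criticalPoint p) :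
    psiDeriv p x < 0 := by
  obtain ⟨hp0, hp1⟩ := hp
  have hx2 : x ^ 2 < p / (1 - p) := (lt_sqrt hx.le).1 hxc
  rw [lt_div_iff₀ (by linarith)] at hx2
  have : 0 < 2 * p * (1 - p) * x ^ (2 * p - 3) := by
    have := rpow_pos_of_pos hx (2 * p - 3); have : 0 < 1 - p := by linarith
    positivity
  unfold psiDeriv; nlinarith

theorem psiDeriv_pos (hp : p ∈ Ioo 0 1) (hxc : criticalPoint p < x) : 0 < psiDeriv p x := by
  obtain ⟨hp0, hp1⟩ := hp
  have hx : 0 < x := (sqrt_nonneg _).trans_lt hxc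
  have hx2 : p / (1 - p) < x ^ 2 := (sqrt_lt' hx).1 hxc
  rw [div_lt_iff₀ (by linarith)] at hx2
  have : 0 < 2 * p * (1 - p) * x ^ (2 * p - 3) := by
    have := rpow_pos_of_pos hx (2 * p - 3); have : 0 < 1 - p := by linarith
    positivity
  unfold psiDeriv; nlinarith

theorem strictAntiOn_psi (hp : p ∈ Ioo 0 1) :
    StrictAntiOn (psi p) (Ioc 0 (criticalPoint p)) := by
  refine strictAntiOn_of_deriv_neg (convex_Ioc 0 (criticalPoint p))
    (fun x hx => (hasDerivAt_psi hx.1).continuousAt.continuousWithinAt) fun x hx => ?_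
  rw [interior_Ioc] at hx
  rw [(hasDerivAt_psi hx.1).deriv]
  exact psiDeriv_neg hp hx.1 hx.2

theorem strictMonoOn_psi (hp : p ∈ Ioo 0 1) :
    StrictMonoOn (psi p) (Ici (criticalPoint p)) := by
  have hpos : ∀ x ∈ Ici (criticalPoint p), 0 < x := fun x hx =>
    (criticalPoint_pos hp).trans_le hx
  refine strictMonoOn_of_deriv_pos (convex_Ici (criticalPoint p))
    (fun x hx => (hasDerivAt_psi (hpos x hx)).continuousAt.continuousWithinAt) fun x hx => ?_
  rw [interior_Ici] at hx
  rw [(hasDerivAt_psi (hpos x (mem_Ici.2 hx.le))).deriv]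
  exact psiDeriv_pos hp hx

structure IsRootPair (p a s t : ℝ) : Prop where
  pos : 0 < s
  lt : s < t
  psi_left : psi p s = a
  psi_right : psi p t = a

namespace IsRootPair

theorem lt_criticalPoint (hp : p ∈ Ioo 0 1) (h : IsRootPair p a s t) :
    s < criticalPoint p := by
  by_contra! hs
  have := strictMonoOn_psi hp hs (hs.trans h.lt.le) h.lt
  rw [h.psi_left, h.psi_right] at this
  exact this.false

theorem criticalPoint_lt (hp : p ∈ Ioo 0 1) (h : IsRootPair p a s t) :
    criticalPoint p < t := by
  by_contra! ht
  have := strictAntiOn_psi hp ⟨h.pos, h.lt.le.trans ht⟩ ⟨h.pos.trans h.lt, ht⟩ h.lt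
  rw [h.psi_left, h.psi_right] at this
  exact this.false

theorem psi_lt (hp : p ∈ Ioo 0 1) (h : IsRootPair p a s t) :
    ∀ x ∈ Ioo s t, psi p x < a := by
  rintro x ⟨hsx, hxt⟩
  rcases le_total x (criticalPoint p) with hx | hx
  · rw [← h.psi_left]
    exact strictAntiOn_psi hp ⟨h.pos, (h.lt_criticalPoint hp).le⟩ ⟨h.pos.trans hsx, hx⟩ hsx
  · rw [← h.psi_right]
    exact strictMonoOn_psi hp hx ((h.criticalPoint_lt hp).le) hxt

theorem psi_le (hp : p ∈ Ioo 0 1) (h : IsRootPair p a s t) :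
    ∀ x ∈ Icc s t, psi p x ≤ a := by
  rintro x ⟨hsx, hxt⟩
  rcases hsx.eq_or_lt with rfl | hsx
  · exact h.psi_left.le
  rcases hxt.eq_or_lt with rfl | hxt
  · exact h.psi_right.le
  exact (h.psi_lt hp x ⟨hsx, hxt⟩).le

variable {s' t' : ℝ}

theorem le_left (hp : p ∈ Ioo 0 1) (h : IsRootPair p a s t) (h' : IsRootPair p b s' t')
    (hba : b ≤ a) : s ≤ s' := by
  by_contra! hs
  have := strictAntiOn_psi hp ⟨h'.pos, (h'.lt_criticalPoint hp).le⟩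
    ⟨h.pos, (h.lt_criticalPoint hp).le⟩ hs
  rw [h.psi_left, h'.psi_left] at this
  linarith

theorem right_le (hp : p ∈ Ioo 0 1) (h : IsRootPair p a s t) (h' : IsRootPair p b s' t')
    (hba : b ≤ a) : t' ≤ t := by
  by_contra! ht
  have := strictMonoOn_psi hp (h.criticalPoint_lt hp).le (h'.criticalPoint_lt hp).le ht
  rw [h.psi_right, h'.psi_right] at this
  linarith

end IsRootPair

theorem psi_eq_of_Qfun_eq_zero (hx : 0 < x) (hQ : Qfun p a x = 0) : psi p x = a := by
  rw [Qfun_eq_mul_sub_psi hx, mul_eq_zero] at hQ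
  exact (sub_eq_zero.1 (hQ.resolve_left (rpow_pos_of_pos hx _).ne')).symm

theorem Qfun_add_sq : Qfun p a x + (1 - p) ^ 2 * x ^ 2 = a * x ^ (2 * (1 - p)) - p ^ 2 := by
  unfold Qfun; ring

theorem integrand_nonneg (hx : 0 ≤ x) : 0 ≤ integrand p a x := by
  rcases le_or_gt (Qfun p a x) 0 with hQ | hQ
  -- outside the roots `√(Qfun p a x) = 0`, and division by `0` gives `0`
  · simp [integrand, sqrt_eq_zero'.2 hQ]
  · refine div_nonneg (rpow_nonneg hx _) (mul_nonneg ?_ (sqrt_nonneg _))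
    rw [← Qfun_add_sq]; positivity

theorem integrand_pos (hx : 0 < x) (hQ : 0 < Qfun p a x) : 0 < integrand p a x := by
  refine div_pos (rpow_pos_of_pos hx _) (mul_pos ?_ (sqrt_pos.2 hQ))
  rw [← Qfun_add_sq]; positivity

theorem integrand_le (hp : p ≠ 1) (hx : 0 < x) (hψ : psi p x < a) :
    integrand p a x ≤ 1 / ((1 - p) ^ 2 * x ^ 2 * √(a - psi p x)) := by
  have hψ' : 0 < a - psi p x := sub_pos.2 hψ
  have hQ : 0 < Qfun p a x := by rw [Qfun_eq_mul_sub_psi hx]; positivity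
  have hsqrtQ : √(Qfun p a x) = x ^ (1 - p) * √(a - psi p x) := by
    rw [Qfun_eq_mul_sub_psi hx, sqrt_mul (by positivity), ← sqrt_sq (rpow_nonneg hx.le (1 - p)),
      ← rpow_natCast, ← rpow_mul hx.le]
    push_cast; ring_nf
  have h1p : 0 < (1 - p) ^ 2 := by positivity
  have hD : (1 - p) ^ 2 * x ^ 2 ≤ a * x ^ (2 * (1 - p)) - p ^ 2 := by
    rw [← Qfun_add_sq]; linarith
  rw [integrand, hsqrtQ, mul_left_comm, ← div_div, div_self (rpow_pos_of_pos hx _).ne']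
  gcongr

theorem measurable_integrand (p a : ℝ) : Measurable (integrand p a) := by
  unfold integrand Qfun; fun_prop

theorem continuousAt_integrand (hx : 0 < x) (hψ : psi p x < a) :
    ContinuousAt (fun q : ℝ × ℝ => integrand p q.1 q.2) (a, x) := by
  have hQ : 0 < Qfun p a x := by
    rw [Qfun_eq_mul_sub_psi hx]; exact mul_pos (rpow_pos_of_pos hx _) (sub_pos.2 hψ)
  have hD : 0 < a * x ^ (2 * (1 - p)) - p ^ 2 := by rw [← Qfun_add_sq]; positivity
  unfold integrand
  refine ContinuousAt.div ?_ ?_ (mul_pos hD (sqrt_pos.2 hQ)).ne'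
  · fun_prop (disch := exact Or.inl hx.ne')
  · unfold Qfun
    fun_prop (disch := exact Or.inl hx.ne')

theorem continuousAt_integral_integrand (hp : p ≠ 1) (hs : 0 < s) (hst : s ≤ t)
    (hψ : ∀ x ∈ Icc s t, psi p x ≤ b) {a₀ : ℝ} (hb : b < a₀) :
    ContinuousAt (fun a => ∫ x in s..t, integrand p a x) a₀ := by
  obtain ⟨c, hbc, hca⟩ := exists_between hb
  have hc : ∀ᶠ a in nhds a₀, c < a := eventually_gt_nhds hca
  refine continuousAt_of_dominated_interval
    (bound := fun _ => 1 / ((1 - p) ^ 2 * s ^ 2 * √(c - b)))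
    (.of_forall fun a => (measurable_integrand p a).aestronglyMeasurable)
    (hc.mono fun a ha => .of_forall fun x hx => ?_) intervalIntegrable_const
    (.of_forall fun x hx => ?_)
  all_goals
    rw [uIoc_of_le hst] at hx
    have hx0 : 0 < x := hs.trans hx.1
    have hψx := hψ x (Ioc_subset_Icc_self hx)
  · rw [norm_of_nonneg (integrand_nonneg hx0.le)]
    refine (integrand_le hp hx0 (by linarith)).trans ?_
    have : 0 < c - b := sub_pos.2 hbc
    have : 0 < (1 - p) ^ 2 := by positivity
    gcongr
    exact hx.1.le
  · exact (continuousAt_integrand hx0 (hψx.trans_lt hb)).comp (f := fun a => (a, x))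
      (by fun_prop)

theorem intervalIntegrable_and_integral_le_sub_of_le_deriv {f g g' : ℝ → ℝ} (hst : s ≤ t)
    (hf : Measurable f) (hg : ContinuousOn g (Icc s t))
    (hderiv : ∀ x ∈ Ioo s t, HasDerivAt g (g' x) x)
    (hf0 : ∀ x ∈ Ioo s t, 0 ≤ f x) (hfg : ∀ x ∈ Ioo s t, f x ≤ g' x) :
    IntervalIntegrable f volume s t ∧ ∫ x in s..t, f x ≤ g t - g s := by
  have hg' : IntervalIntegrable g' volume s t := by
    refine intervalIntegrable_deriv_of_nonneg (by rwa [uIcc_of_le hst]) ?_ ?_ <;>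
      simp only [min_eq_left hst, max_eq_right hst]
    exacts [hderiv, fun x hx => (hf0 x hx).trans (hfg x hx)]
  have hfi : IntervalIntegrable f volume s t := by
    refine (intervalIntegrable_iff_integrableOn_Ioo_of_le hst).2
      (((intervalIntegrable_iff_integrableOn_Ioo_of_le hst).1 hg').mono'
        hf.aestronglyMeasurable ?_)
    refine (ae_restrict_iff' measurableSet_Ioo).2 (.of_forall fun x hx => ?_)
    rw [norm_of_nonneg (hf0 x hx)]
    exact hfg x hx
  refine ⟨hfi, ?_⟩
  rw [← integral_eq_sub_of_hasDerivAt_of_le hst hg hderiv hg']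
  exact integral_mono_on_of_le_Ioo hst hfi hg' hfg

theorem exists_le_mul_of_continuousOn {X : Type*} [TopologicalSpace X] {f g : X → ℝ}
    {K : Set X} (hK : IsCompact K)
    (hf : ContinuousOn f K) (hg : ContinuousOn g K) (hg0 : ∀ x ∈ K, 0 < g x) :
    ∃ k, 0 ≤ k ∧ ∀ x ∈ K, f x ≤ k * g x := by
  obtain ⟨k, hk⟩ := hK.exists_bound_of_continuousOn (hf.div hg fun x hx => (hg0 x hx).ne')
  refine ⟨max k 0, le_max_right _ _, fun x hx => ?_⟩
  have := (le_abs_self _).trans ((hk x hx).trans (le_max_left k 0))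
  rwa [Pi.div_apply, div_le_iff₀ (hg0 x hx)] at this

theorem intervalIntegrable_and_integral_integrand_le (hp : p ≠ 1) (hs : 0 < s) (hst : s ≤ t)
    (hψ : ∀ x ∈ Ioo s t, psi p x < a) {k : ℝ}
    (hk : ∀ x ∈ Ioo s t, 1 / ((1 - p) ^ 2 * x ^ 2) ≤ k * psiDeriv p x) :
    IntervalIntegrable (integrand p a) volume s t ∧
      ∫ x in s..t, integrand p a x ≤ 2 * k * (√(a - psi p s) - √(a - psi p t)) := by
  have hcont : ContinuousOn (fun x => -(2 * k) * √(a - psi p x)) (Icc s t) := fun x hx => by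
    have := (hasDerivAt_psi (p := p) (hs.trans_le hx.1)).continuousAt
    exact ContinuousAt.continuousWithinAt (by fun_prop)
  convert intervalIntegrable_and_integral_le_sub_of_le_deriv hst (measurable_integrand p a) hcont
    (g' := fun x => k * psiDeriv p x / √(a - psi p x)) (fun x hx => ?_)
    (fun x hx => integrand_nonneg (hs.trans hx.1).le) (fun x hx => ?_) using 2
  · ring
  all_goals
    have hx0 : 0 < x := hs.trans hx.1
    have hψx : 0 < a - psi p x := sub_pos.2 (hψ x hx)
  · refine ((((hasDerivAt_psi hx0).const_sub a).sqrt hψx.ne').const_mul (-(2 * k))).congr_deriv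
      ?_
    ring
  · refine (integrand_le hp hx0 (hψ x hx)).trans ?_
    rw [← div_div]
    exact div_le_div_of_nonneg_right (hk x hx) (sqrt_nonneg _)

theorem IsRootPair.abs_integral_sub_integral_le (hp : p ∈ Ioo 0 1) {s' t' kL kR : ℝ}
    (h : IsRootPair p a s t) (h' : IsRootPair p b s' t') (hba : b < a)
    (hkL : ∀ x ∈ Ioo s s', 1 / ((1 - p) ^ 2 * x ^ 2) ≤ -kL * psiDeriv p x)
    (hkR : ∀ x ∈ Ioo t' t, 1 / ((1 - p) ^ 2 * x ^ 2) ≤ kR * psiDeriv p x) :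
    IntervalIntegrable (integrand p a) volume s t ∧
      |(∫ x in s..t, integrand p a x) - ∫ x in s'..t', integrand p a x| ≤
        2 * (kL + kR) * √(a - b) := by
  have hss' := h.le_left hp h' hba.le
  have ht't := h.right_le hp h' hba.le
  obtain ⟨hiL, hL⟩ := intervalIntegrable_and_integral_integrand_le hp.2.ne h.pos hss'
    (fun x hx => h.psi_lt hp x ⟨hx.1, hx.2.trans (h'.lt.trans_le ht't)⟩) hkL
  obtain ⟨hiR, hR⟩ := intervalIntegrable_and_integral_integrand_le hp.2.ne
    (h'.pos.trans h'.lt) ht't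
    (fun x hx => h.psi_lt hp x ⟨hss'.trans_lt (h'.lt.trans hx.1), hx.2⟩) hkR
  have hiM : IntervalIntegrable (integrand p a) volume s' t' := by
    refine ContinuousOn.intervalIntegrable_of_Icc h'.lt.le fun x hx => ?_
    have hx0 : 0 < x := h'.pos.trans_le hx.1
    exact ((continuousAt_integrand hx0 ((h'.psi_le hp x hx).trans_lt hba)).comp
      (f := fun x => (a, x)) (by fun_prop)).continuousWithinAt
  have hsplit : (∫ x in s..t, integrand p a x) - ∫ x in s'..t', integrand p a x =
      (∫ x in s..s', integrand p a x) + ∫ x in t'..t, integrand p a x := by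
    rw [← integral_add_adjacent_intervals (hiL.trans hiM) hiR,
      ← integral_add_adjacent_intervals hiL hiM]
    ring
  have hnonneg : ∀ {u v}, 0 < u → u ≤ v → 0 ≤ ∫ x in u..v, integrand p a x :=
    fun hu huv => integral_nonneg huv fun x hx => integrand_nonneg (hu.le.trans hx.1)
  refine ⟨(hiL.trans hiM).trans hiR, ?_⟩
  rw [hsplit,
    abs_of_nonneg (add_nonneg (hnonneg h.pos hss') (hnonneg (h'.pos.trans h'.lt) ht't))]
  rw [h.psi_left, h'.psi_left, sub_self, sqrt_zero] at hL
  rw [h.psi_right, h'.psi_right, sub_self, sqrt_zero] at hR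
  linarith

theorem exists_abs_integral_sub_integral_le (hp : p ∈ Ioo 0 1) {β α : ℝ → ℝ} {b₀ A : ℝ}
    (hb₀A : b₀ ≤ A) (hβα : ∀ a ∈ Icc b₀ A, IsRootPair p a (β a) (α a)) :
    ∃ K, 0 ≤ K ∧ ∀ b a, b₀ ≤ b → b < a → a ≤ A →
      IntervalIntegrable (integrand p a) volume (β a) (α a) ∧
      |(∫ x in β a..α a, integrand p a x) - ∫ x in β b..α b, integrand p a x| ≤
        K * √(a - b) := by
  have h₀ := hβα b₀ ⟨le_rfl, hb₀A⟩
  have hA := hβα A ⟨hb₀A, le_rfl⟩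
  have hcont : ∀ x ∈ Ioi (0 : ℝ), ContinuousAt (fun x => 1 / ((1 - p) ^ 2 * x ^ 2)) x :=
    fun x hx => by
      have : (1 - p) ^ 2 * x ^ 2 ≠ 0 := by have := sub_pos.2 hp.2; have := hx.out; positivity
      fun_prop (disch := exact this)
  obtain ⟨kL, hkL0, hkL⟩ := exists_le_mul_of_continuousOn isCompact_Icc
    (fun x hx => (hcont x (hA.pos.trans_le hx.1)).continuousWithinAt)
    (fun x hx => (continuousAt_psiDeriv (hA.pos.trans_le hx.1)).neg.continuousWithinAt)
    (fun x hx => neg_pos.2 (psiDeriv_neg hp (hA.pos.trans_le hx.1)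
      (hx.2.trans_lt (h₀.lt_criticalPoint hp))))
  obtain ⟨kR, hkR0, hkR⟩ := exists_le_mul_of_continuousOn isCompact_Icc
    (fun x hx => (hcont x ((h₀.pos.trans h₀.lt).trans_le hx.1)).continuousWithinAt)
    (fun x hx =>
      (continuousAt_psiDeriv ((h₀.pos.trans h₀.lt).trans_le hx.1)).continuousWithinAt)
    (fun x hx => psiDeriv_pos hp ((h₀.criticalPoint_lt hp).trans_le hx.1))
  refine ⟨2 * (kL + kR), by positivity, fun b a hb₀b hba haA => ?_⟩
  have hb := hβα b ⟨hb₀b, hba.le.trans haA⟩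
  have ha := hβα a ⟨hb₀b.trans hba.le, haA⟩
  refine ha.abs_integral_sub_integral_le hp hb hba (fun x hx => ?_) (fun x hx => ?_)
  · rw [neg_mul, ← mul_neg]
    exact hkL x
      ⟨(hA.le_left hp ha haA).trans hx.1.le, hx.2.le.trans (hb.le_left hp h₀ hb₀b)⟩
  · exact hkR x
      ⟨(hb.right_le hp h₀ hb₀b).trans hx.1.le, hx.2.le.trans (hA.right_le hp ha haA)⟩

theorem continuousAt_integral_integrand_between_roots (hp : p ∈ Ioo 0 1) {β α : ℝ → ℝ}
    {c a₀ : ℝ} (hβα : ∀ a, c < a → IsRootPair p a (β a) (α a)) (ha₀ : c < a₀) :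
    ContinuousAt (fun a => ∫ x in β a..α a, integrand p a x) a₀ := by
  obtain ⟨b₀, hcb₀, hb₀a₀⟩ := exists_between ha₀
  obtain ⟨K, hK0, hK⟩ := exists_abs_integral_sub_integral_le hp (A := a₀ + 1) (by linarith)
    fun a ha => hβα a (hcb₀.trans_le ha.1)
  refine continuousAt_of_locally_uniform_approx_of_continuousAt fun u hu => ?_
  obtain ⟨ε, hε, hεu⟩ := Metric.mem_uniformity_dist.1 hu
  have hsmall :
      ∀ᶠ η in nhdsWithin 0 (Ioi 0), K * √(2 * η) < ε ∧ η < a₀ - b₀ ∧ η < 1 := by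
    have : Continuous fun η : ℝ => K * √(2 * η) := by fun_prop
    refine ((this.tendsto' 0 0 (by simp)).mono_left nhdsWithin_le_nhds).eventually
      (gt_mem_nhds hε) |>.and (nhdsWithin_le_nhds ((eventually_lt_nhds (sub_pos.2 hb₀a₀)).and
      (eventually_lt_nhds one_pos)))
  obtain ⟨η, ⟨hηε, hηb₀, hη1⟩, hη0⟩ := (hsmall.and self_mem_nhdsWithin).exists
  have hb := hβα (a₀ - η) (by linarith)
  refine ⟨Ioo (a₀ - η) (a₀ + η), Ioo_mem_nhds (by linarith) (by linarith),
    fun a => ∫ x in β (a₀ - η)..α (a₀ - η), integrand p a x,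
    continuousAt_integral_integrand hp.2.ne hb.pos hb.lt.le (hb.psi_le hp) (by linarith),
    fun a ha => hεu ?_⟩
  rw [dist_eq]
  calc _ ≤ K * √(a - (a₀ - η)) := (hK _ a (by linarith) ha.1 (by linarith [ha.2])).2
    _ ≤ K * √(2 * η) := by gcongr; linarith [ha.2]
    _ < ε := hηε

end PElastic

open PElastic in
/-- For fixed `p ∈ (0,1)`, the improper integral defining `Λ_p(a)` converges
for every `a > a_* = p^p·(1−p)^(1−p)`, and `Λ_p : (a_*,∞) → ℝ` is continuous and takes only
positive values. -/
theorem Lam_continuous_positive (p : ℝ) (hp : p ∈ Set.Ioo (0 : ℝ) 1)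
    (β α : ℝ → ℝ)
    (hroots : ∀ a : ℝ, p ^ p * (1 - p) ^ (1 - p) < a →
      0 < β a ∧ β a < α a ∧ Qfun p a (β a) = 0 ∧ Qfun p a (α a) = 0 ∧
      ∀ x ∈ Set.Ioo (β a) (α a), 0 < Qfun p a x) :
    (∀ a : ℝ, p ^ p * (1 - p) ^ (1 - p) < a →
      IntervalIntegrable
        (fun x => x ^ (1 - p) / ((a * x ^ (2 * (1 - p)) - p ^ 2) * Real.sqrt (Qfun p a x)))
        volume (β a) (α a)) ∧
    ContinuousOn (Lam p β α) (Set.Ioi (p ^ p * (1 - p) ^ (1 - p))) ∧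
    (∀ a : ℝ, p ^ p * (1 - p) ^ (1 - p) < a → 0 < Lam p β α a) := by
  have hβα (a : ℝ) (ha : p ^ p * (1 - p) ^ (1 - p) < a) : IsRootPair p a (β a) (α a) := by
    obtain ⟨hβ, hβα, hQβ, hQα, -⟩ := hroots a ha
    exact ⟨hβ, hβα, psi_eq_of_Qfun_eq_zero hβ hQβ,
      psi_eq_of_Qfun_eq_zero (hβ.trans hβα) hQα⟩
  have hint (a : ℝ) (ha : p ^ p * (1 - p) ^ (1 - p) < a) :
      IntervalIntegrable (integrand p a) volume (β a) (α a) := by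
    obtain ⟨b, hb, hba⟩ := exists_between ha
    obtain ⟨K, -, hK⟩ := exists_abs_integral_sub_integral_le hp hba.le
      fun a' ha' => hβα a' (hb.trans_le ha'.1)
    exact (hK b a le_rfl hba le_rfl).1
  refine ⟨hint, fun a ha => ContinuousAt.continuousWithinAt ?_, fun a ha => ?_⟩
  · exact (continuous_const.mul continuous_sqrt).continuousAt.mul
      (continuousAt_integral_integrand_between_roots hp hβα ha)
  · obtain ⟨hβ, hβα, -, -, hQ⟩ := hroots a ha
    have hp0 := hp.1
    have h1p : 0 < 1 - p := sub_pos.2 hp.2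
    have ha0 : 0 < a := lt_of_le_of_lt (by positivity) ha
    exact mul_pos (by positivity) (intervalIntegral_pos_of_pos_on (hint a ha)
      (fun x hx => integrand_pos (hβ.trans hx.1) (hQ x hx)) hβα)
end

section
/- Fix p ∈ (0,1). Consider the set S of real numbers of the form ∫_0^L (⟨γ''(s), γ(s) × γ'(s)⟩)^p ds, where L > 0 and γ : ℝ → ℝ³ ranges over smooth L-periodic curves with ‖γ(s)‖ = 1 and ‖γ'(s)‖ = 1 for all s (closed unit-speed curves on the unit 2-sphere) whose geodesic curvature κ(s) := ⟨γ''(s), γ(s) × γ'(s)⟩ is strictly positive for all s. Then every element of S is strictly positive, and the infimum of S equals 0; in particular the infimum is not attained. -/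
open Real Set MeasureTheory intervalIntegral

/-- The Euclidean dot product in `ℝ³`. -/
def dot3 (v w : Fin 3 → ℝ) : ℝ := v 0 * w 0 + v 1 * w 1 + v 2 * w 2

/-- The cross product in `ℝ³`. -/
def cross3 (v w : Fin 3 → ℝ) : Fin 3 → ℝ :=
  ![v 1 * w 2 - v 2 * w 1, v 2 * w 0 - v 0 * w 2, v 0 * w 1 - v 1 * w 0]

/-- The Euclidean norm in `ℝ³`. -/
noncomputable def norm3 (v : Fin 3 → ℝ) : ℝ := Real.sqrt (dot3 v v)

/-- The set of values of the `p`-elastic energy `∫_0^L κ^p ds` over smooth closed unit-speed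
convex curves on the unit `2`-sphere. -/
noncomputable def pElasticEnergies (p : ℝ) : Set ℝ :=
  {e : ℝ | ∃ (L : ℝ) (γ : ℝ → Fin 3 → ℝ), 0 < L ∧ ContDiff ℝ (⊤ : ℕ∞) γ ∧
    (∀ s, γ (s + L) = γ s) ∧
    (∀ s, norm3 (γ s) = 1) ∧ (∀ s, norm3 (deriv γ s) = 1) ∧
    (∀ s, 0 < dot3 (deriv (deriv γ) s) (cross3 (γ s) (deriv γ s))) ∧
    e = ∫ s in (0 : ℝ)..L, (dot3 (deriv (deriv γ) s) (cross3 (γ s) (deriv γ s))) ^ p}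

lemma circle_mem (p : ℝ) {r : ℝ} (hr0 : 0 < r) (hr1 : r < 1) :
    2 * π * r * (Real.sqrt (1 - r ^ 2) / r) ^ p ∈ pElasticEnergies p := by
  have hr : r ≠ 0 := hr0.ne'
  have hc2 : (0:ℝ) < 1 - r ^ 2 := by nlinarith
  set c := Real.sqrt (1 - r ^ 2) with hc_def
  have hc : 0 < c := Real.sqrt_pos.mpr hc2
  have hcsq : c ^ 2 = 1 - r ^ 2 := Real.sq_sqrt hc2.le
  set γ : ℝ → Fin 3 → ℝ := fun s => ![r * Real.cos (s / r), r * Real.sin (s / r), c] with hγ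
  set g1 : ℝ → Fin 3 → ℝ := fun s => ![-Real.sin (s / r), Real.cos (s / r), 0] with hg1
  set g2 : ℝ → Fin 3 → ℝ :=
    fun s => ![-(Real.cos (s / r)) / r, -(Real.sin (s / r)) / r, 0] with hg2
  have hdiv : ∀ s : ℝ, HasDerivAt (fun t : ℝ => t / r) (1 / r) s :=
    fun s => (hasDerivAt_id s).div_const r
  have hD1 : ∀ s, HasDerivAt γ (g1 s) s := by
    intro s
    rw [hasDerivAt_pi]
    intro i
    fin_cases i
    · simp only [hγ, hg1, Fin.zero_eta, Matrix.cons_val_zero]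
      have h := ((Real.hasDerivAt_cos (s / r)).comp s (hdiv s)).const_mul r
      convert h using 1
      case e'_4 => rfl
      case e'_8 => rfl
      field_simp
    · simp only [hγ, hg1, Fin.mk_one, Matrix.cons_val_one, Matrix.head_cons, Matrix.cons_val_zero]
      have h := ((Real.hasDerivAt_sin (s / r)).comp s (hdiv s)).const_mul r
      convert h using 1
      case e'_4 => rfl
      case e'_8 => rfl
      first
      | (field_simp; ring)
      | field_simp
    · simp only [hγ, hg1]
      exact hasDerivAt_const s c
  have hD2 : ∀ s, HasDerivAt g1 (g2 s) s := by
    intro s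
    rw [hasDerivAt_pi]
    intro i
    fin_cases i
    · simp only [hg1, hg2, Fin.zero_eta, Matrix.cons_val_zero]
      have h := ((Real.hasDerivAt_sin (s / r)).comp s (hdiv s)).neg
      convert h using 1
      case e'_8 => rfl
      first
      | (field_simp; ring)
      | field_simp
    · simp only [hg1, hg2, Fin.mk_one, Matrix.cons_val_one, Matrix.head_cons, Matrix.cons_val_zero]
      have h := (Real.hasDerivAt_cos (s / r)).comp s (hdiv s)
      convert h using 1
      case e'_4 => rfl
      case e'_8 => rfl
      first
      | (field_simp; ring)
      | field_simp
    · simp only [hg1, hg2]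
      exact hasDerivAt_const s 0
  have hd1 : deriv γ = g1 := funext fun s => (hD1 s).deriv
  have hd2 : deriv (deriv γ) = g2 := by rw [hd1]; exact funext fun s => (hD2 s).deriv
  have hκ : ∀ s, dot3 (g2 s) (cross3 (γ s) (g1 s)) = c / r := by
    intro s
    have hsc := Real.sin_sq_add_cos_sq (s / r)
    simp only [hγ, hg1, hg2, dot3, cross3, Matrix.cons_val_zero, Matrix.cons_val_one,
      Matrix.head_cons, Matrix.cons_val_two, Matrix.tail_cons]
    field_simp
    nlinarith [hsc]
  refine ⟨2 * π * r, γ, by positivity, ?_, ?_, ?_, ?_, ?_, ?_⟩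
  · rw [contDiff_pi]
    intro i
    fin_cases i
    · simp only [hγ, Matrix.cons_val_zero]
      exact contDiff_const.mul (Real.contDiff_cos.comp (contDiff_id.div_const r))
    · simp only [hγ, Matrix.cons_val_one, Matrix.head_cons]
      exact contDiff_const.mul (Real.contDiff_sin.comp (contDiff_id.div_const r))
    · simp only [hγ]
      exact contDiff_const
  · intro s
    have harg : (s + 2 * π * r) / r = s / r + 2 * π := by
      first
      | (field_simp; ring)
      | field_simp
    simp only [hγ, harg, Real.cos_add_two_pi, Real.sin_add_two_pi]
  · intro s
    have hdd : dot3 (γ s) (γ s) = 1 := by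
      have hsc := Real.sin_sq_add_cos_sq (s / r)
      simp only [hγ, dot3, Matrix.cons_val_zero, Matrix.cons_val_one, Matrix.head_cons,
        Matrix.cons_val_two, Matrix.tail_cons]
      nlinarith [hsc, hcsq]
    rw [norm3, hdd, Real.sqrt_one]
  · intro s
    rw [hd1]
    have hdd : dot3 (g1 s) (g1 s) = 1 := by
      have hsc := Real.sin_sq_add_cos_sq (s / r)
      simp only [hg1, dot3, Matrix.cons_val_zero, Matrix.cons_val_one, Matrix.head_cons,
        Matrix.cons_val_two, Matrix.tail_cons]
      nlinarith [hsc]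
    rw [norm3, hdd, Real.sqrt_one]
  · intro s
    rw [hd2, hd1, hκ s]
    positivity
  · rw [hd2, hd1]
    have : (fun s => (dot3 (g2 s) (cross3 (γ s) (g1 s))) ^ p) = fun _ : ℝ => (c / r) ^ p := by
      funext s; rw [hκ s]
    rw [this, intervalIntegral.integral_const, smul_eq_mul]
    ring

lemma exists_small (p : ℝ) (hp : p ∈ Set.Ioo (0 : ℝ) 1) {ε : ℝ} (hε : 0 < ε) :
    ∃ e ∈ pElasticEnergies p, e < ε := by
  have hπ := Real.pi_pos
  have hb : 0 < ε / (4 * π) := by positivity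
  set r := min (1/2 : ℝ) ((ε / (4 * π)) ^ (1 / (1 - p))) with hr_def
  have hr0 : 0 < r := lt_min (by norm_num) (Real.rpow_pos_of_pos hb _)
  have hr1 : r < 1 := lt_of_le_of_lt (min_le_left _ _) (by norm_num)
  refine ⟨_, circle_mem p hr0 hr1, ?_⟩
  set c := Real.sqrt (1 - r ^ 2)
  have hc0 : 0 ≤ c := Real.sqrt_nonneg _
  have hc1 : c ≤ 1 := Real.sqrt_le_one.mpr (by nlinarith)
  have h1p : (0:ℝ) < 1 - p := by linarith [hp.2]
  have h1 : (c / r) ^ p ≤ (1 / r) ^ p :=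
    Real.rpow_le_rpow (by positivity) (by gcongr) hp.1.le
  have h2 : (1 / r : ℝ) ^ p = r ^ (-p) := by
    rw [one_div, Real.inv_rpow hr0.le, ← Real.rpow_neg hr0.le]
  have h3 : r * r ^ (-p) = r ^ (1 - p) := by
    rw [show (1:ℝ) - p = 1 + -p by ring, Real.rpow_add hr0, Real.rpow_one]
  have h4 : r ^ (1 - p) ≤ ε / (4 * π) := by
    have hle : r ≤ (ε / (4 * π)) ^ (1 / (1 - p)) := min_le_right _ _
    have h := Real.rpow_le_rpow hr0.le hle h1p.le
    rwa [← Real.rpow_mul hb.le, one_div, inv_mul_cancel₀ h1p.ne', Real.rpow_one] at h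
  calc 2 * π * r * (c / r) ^ p ≤ 2 * π * r * (1 / r) ^ p :=
        mul_le_mul_of_nonneg_left h1 (by positivity)
    _ = 2 * π * (r ^ (1 - p)) := by rw [h2, ← h3]; ring
    _ ≤ 2 * π * (ε / (4 * π)) := mul_le_mul_of_nonneg_left h4 (by positivity)
    _ = ε / 2 := by field_simp; ring
    _ < ε := by linarith

/-- For `p ∈ (0,1)`, every value of the `p`-elastic energy on closed convex
spherical curves is strictly positive, and the infimum of these values is `0`; in particular
the infimum is not attained. -/
theorem pElastic_infimum_zero (p : ℝ) (hp : p ∈ Set.Ioo (0 : ℝ) 1) :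
    (∀ e ∈ pElasticEnergies p, 0 < e) ∧
    IsGLB (pElasticEnergies p) 0 ∧
    0 ∉ pElasticEnergies p := by
  have hpos : ∀ e ∈ pElasticEnergies p, 0 < e := by
    rintro e ⟨L, γ, hL, hsm, -, -, -, hκ, rfl⟩
    have h1 : ContDiff ℝ (↑(⊤:ℕ∞)) γ := hsm.of_le (by simp)
    have h2 := (contDiff_infty_iff_deriv.mp h1).2
    have h3 := (contDiff_infty_iff_deriv.mp h2).2
    have hc0 : Continuous γ := h1.continuous
    have hc1 : Continuous (deriv γ) := h2.continuous
    have hc2 : Continuous (deriv (deriv γ)) := h3.continuous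
    have hκc : Continuous (fun s => dot3 (deriv (deriv γ) s) (cross3 (γ s) (deriv γ s))) := by
      simp only [dot3, cross3, Matrix.cons_val_zero, Matrix.cons_val_one, Matrix.head_cons,
        Matrix.cons_val_two, Matrix.tail_cons]
      fun_prop
    have hint : Continuous (fun s => (dot3 (deriv (deriv γ) s) (cross3 (γ s) (deriv γ s))) ^ p) :=
      hκc.rpow_const (fun x => Or.inr hp.1.le)
    exact intervalIntegral.intervalIntegral_pos_of_pos_on (hint.intervalIntegrable 0 L)
      (fun x _ => Real.rpow_pos_of_pos (hκ x) p) hL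
  refine ⟨hpos, ⟨fun e he => (hpos e he).le, ?_⟩, fun h => lt_irrefl 0 (hpos 0 h)⟩
  intro b hb
  by_contra h
  push_neg at h
  obtain ⟨e, heS, helt⟩ := exists_small p hp h
  exact absurd (hb heS) (not_le.mpr helt)
end

section
/- Let p ∈ (0,1), a > a_* := p^p·(1−p)^(1−p), let β < α be the two positive roots of Q_{p,a}, and let t ∈ ℝ. Then the following integration-by-parts identity holds (all improper integrals converging): (1−p)²·(1+t)·∫_β^α x^(1+t)/√(Q_{p,a}(x)) dx = a·(1+t−p)·∫_β^α x^(1+t−2p)/√(Q_{p,a}(x)) dx − t·p²·∫_β^α x^(t−1)/√(Q_{p,a}(x)) dx. -/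
open Real Set MeasureTheory intervalIntegral

/-!
The function `x ^ t * √(Q x)` vanishes at both roots `β` and `α`, and its derivative is exactly
`(a(1+t−p) x^(1+t−2p) − (1−p)²(1+t) x^(1+t) − t p² x^(t−1)) / √(Q x)`; the identity is the
fundamental theorem of calculus for it. The integrals converge because `Q(x) = Q̃(x²)` where
`Q̃(y) = a y^(1−p) − (1−p)² y − p²` is concave: a concave function vanishing at the ends of an
interval and positive inside is bounded below by a multiple of `(y − β²)(α² − y)`, so
`Q(x) ≥ C (x − β)(α − x)` and the integrands are `O((x − β)^(−1/2) + (α − x)^(−1/2))`.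
-/

lemma ConcaveOn.sub_mul_add_sub_mul_le {s : Set ℝ} {f : ℝ → ℝ} (hf : ConcaveOn ℝ s f) {x y z : ℝ}
    (hx : x ∈ s) (hz : z ∈ s) (hy : y ∈ Icc x z) :
    (z - y) * f x + (y - x) * f z ≤ (z - x) * f y := by
  rcases hy.1.eq_or_lt with rfl | hxy
  · nlinarith
  rcases hy.2.eq_or_lt with rfl | hyz
  · nlinarith
  have := hf.neg.secant_mono_aux1 hx hz hxy hyz
  simp only [Pi.neg_apply] at this
  linarith

lemma ConcaveOn.mul_sub_mul_sub_le {f : ℝ → ℝ} {b c m y : ℝ} (hf : ConcaveOn ℝ (Icc b c) f)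
    (hb : 0 ≤ f b) (hc : 0 ≤ f c) (hm : m ∈ Icc b c) (hy : y ∈ Icc b c) :
    f m * ((y - b) * (c - y)) ≤ (c - b) ^ 2 * f y := by
  have hbc : b ≤ c := hy.1.trans hy.2
  have hfy : 0 ≤ f y := (le_min hb hc).trans (hf.min_le_of_mem_Icc (left_mem_Icc.2 hbc)
    (right_mem_Icc.2 hbc) hy)
  obtain ⟨hby, hyc⟩ := hy
  rcases le_total y m with hym | hmy
  · have hchord := hf.sub_mul_add_sub_mul_le (left_mem_Icc.2 hbc) hm ⟨hby, hym⟩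
    have hfm : (y - b) * f m ≤ (m - b) * f y := by nlinarith [mul_nonneg (sub_nonneg.2 hym) hb]
    have hcoef : (m - b) * (c - y) ≤ (c - b) ^ 2 := by nlinarith [hm.2]
    nlinarith [mul_le_mul_of_nonneg_right hfm (sub_nonneg.2 hyc),
      mul_le_mul_of_nonneg_right hcoef hfy]
  · have hchord := hf.sub_mul_add_sub_mul_le hm (right_mem_Icc.2 hbc) ⟨hmy, hyc⟩
    have hfm : (c - y) * f m ≤ (c - m) * f y := by nlinarith [mul_nonneg (sub_nonneg.2 hmy) hc]
    have hcoef : (c - m) * (y - b) ≤ (c - b) ^ 2 := by nlinarith [hm.1]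
    nlinarith [mul_le_mul_of_nonneg_right hfm (sub_nonneg.2 hby),
      mul_le_mul_of_nonneg_right hcoef hfy]

lemma inv_sqrt_mul_le {u v : ℝ} (hu : 0 < u) (hv : 0 < v) :
    (√(u * v))⁻¹ ≤ ((√u)⁻¹ + (√v)⁻¹) / √(u + v) := by
  have hsu := sqrt_pos.2 hu
  have hsv := sqrt_pos.2 hv
  have hsum : √(u + v) ≤ √u + √v := by
    rw [sqrt_le_left (by positivity)]
    nlinarith [sq_sqrt hu.le, sq_sqrt hv.le]
  rw [sqrt_mul hu.le, inv_add_inv hsu.ne' hsv.ne', le_div_iff₀ (by positivity), inv_mul_eq_div]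
  exact div_le_div_of_nonneg_right hsum (by positivity)

lemma intervalIntegrable_sub_rpow_add_rpow_sub {a b r : ℝ} (hr : -1 < r) :
    IntervalIntegrable (fun x => (x - a) ^ r + (b - x) ^ r) volume a b := by
  have h₁ := (intervalIntegrable_rpow' (a := 0) (b := b - a) hr).comp_sub_right a
  have h₂ := (intervalIntegrable_rpow' (a := b - a) (b := 0) hr).comp_sub_left b
  simp only [zero_add, sub_add_cancel, sub_sub_cancel, sub_zero] at h₁ h₂
  exact h₁.add h₂

lemma intervalIntegrable_div_sqrt_of_mul_le {f g : ℝ → ℝ} {a b C : ℝ} (hab : a ≤ b) (hC : 0 < C)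
    (hf : ContinuousOn f (Icc a b)) (hg : ContinuousOn g (Ioo a b))
    (hbound : ∀ x ∈ Ioo a b, C * ((x - a) * (b - x)) ≤ g x) :
    IntervalIntegrable (fun x => f x / √(g x)) volume a b := by
  obtain ⟨M, hM⟩ := isCompact_Icc.exists_bound_of_continuousOn hf
  have hg_pos : ∀ x ∈ Ioo a b, 0 < g x := fun x hx =>
    (mul_pos hC (mul_pos (sub_pos.2 hx.1) (sub_pos.2 hx.2))).trans_le (hbound x hx)
  have hdom := ((intervalIntegrable_sub_rpow_add_rpow_sub (a := a) (b := b)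
    (r := -(1 / 2)) (by norm_num)).const_mul (M / √C / √(b - a)))
  rw [intervalIntegrable_iff_integrableOn_Ioo_of_le hab] at hdom ⊢
  have hcont : ContinuousOn (fun x => f x / √(g x)) (Ioo a b) :=
    (hf.mono Ioo_subset_Icc_self).div (continuous_sqrt.comp_continuousOn hg)
      fun x hx => (sqrt_pos.2 (hg_pos x hx)).ne'
  refine hdom.mono' (hcont.aestronglyMeasurable measurableSet_Ioo)
    (ae_restrict_of_forall_mem measurableSet_Ioo fun x hx => ?_)
  have hxa : 0 < x - a := sub_pos.2 hx.1
  have hbx : 0 < b - x := sub_pos.2 hx.2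
  have hM0 : 0 ≤ M := (norm_nonneg _).trans (hM x (Ioo_subset_Icc_self hx))
  rw [rpow_neg hxa.le, rpow_neg hbx.le, ← sqrt_eq_rpow, ← sqrt_eq_rpow, norm_div,
    norm_of_nonneg (sqrt_nonneg _)]
  calc ‖f x‖ / √(g x) ≤ M / √(C * ((x - a) * (b - x))) :=
        div_le_div₀ hM0 (hM x (Ioo_subset_Icc_self hx)) (by positivity)
          (sqrt_le_sqrt (hbound x hx))
    _ = M / √C * (√((x - a) * (b - x)))⁻¹ := by
        rw [sqrt_mul hC.le]; field_simp
    _ ≤ M / √C * (((√(x - a))⁻¹ + (√(b - x))⁻¹) / √(x - a + (b - x))) :=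
        mul_le_mul_of_nonneg_left (inv_sqrt_mul_le hxa hbx) (by positivity)
    _ = M / √C / √(b - a) * ((√(x - a))⁻¹ + (√(b - x))⁻¹) := by
        rw [show x - a + (b - x) = b - a by ring]; ring

noncomputable def QfunSq (p a y : ℝ) : ℝ :=
  a * y ^ (1 - p) - (1 - p) ^ 2 * y - p ^ 2

lemma Qfun_eq_QfunSq {p a x : ℝ} (hx : 0 ≤ x) : Qfun p a x = QfunSq p a (x ^ 2) := by
  rw [Qfun, QfunSq, rpow_mul hx, rpow_two]

lemma concaveOn_QfunSq {p a : ℝ} (hp : p ∈ Icc 0 1) (ha : 0 ≤ a) :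
    ConcaveOn ℝ (Ici 0) (QfunSq p a) := by
  have := (((concaveOn_rpow (sub_nonneg.2 hp.2) (by linarith [hp.1])).smul ha).sub
    ((convexOn_id (convex_Ici 0)).smul (sq_nonneg (1 - p)))).add_const (-p ^ 2)
  refine this.congr fun y _ => ?_
  simp only [Pi.add_apply, Pi.sub_apply, smul_eq_mul, id, QfunSq]
  ring

lemma exists_pos_mul_le_Qfun {p a β α : ℝ} (hp : p ∈ Icc 0 1) (ha : 0 ≤ a) (hβ : 0 < β)
    (hβα : β < α) (hQβ : 0 ≤ Qfun p a β) (hQα : 0 ≤ Qfun p a α)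
    (hQmid : 0 < Qfun p a ((β + α) / 2)) :
    ∃ C > 0, ∀ x ∈ Icc β α, C * ((x - β) * (α - x)) ≤ Qfun p a x := by
  have hα : 0 < α := hβ.trans hβα
  have hsq : β ^ 2 < α ^ 2 := by gcongr
  have hconc : ConcaveOn ℝ (Icc (β ^ 2) (α ^ 2)) (QfunSq p a) :=
    (concaveOn_QfunSq hp ha).subset (fun y hy => (sq_nonneg β).trans hy.1) (convex_Icc _ _)
  rw [Qfun_eq_QfunSq hβ.le] at hQβ
  rw [Qfun_eq_QfunSq hα.le] at hQα
  rw [Qfun_eq_QfunSq (by positivity)] at hQmid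
  refine ⟨QfunSq p a (((β + α) / 2) ^ 2) * (4 * β ^ 2) / (α ^ 2 - β ^ 2) ^ 2,
    by have := sub_pos.2 hsq; positivity, fun x hx => ?_⟩
  have hx0 : 0 < x := hβ.trans_le hx.1
  have hxsq : x ^ 2 ∈ Icc (β ^ 2) (α ^ 2) := ⟨by gcongr; exact hx.1, by gcongr; exact hx.2⟩
  have htent := hconc.mul_sub_mul_sub_le (m := ((β + α) / 2) ^ 2) hQβ hQα
    ⟨by gcongr; linarith, by gcongr; linarith⟩ hxsq
  have hfactor : 4 * β ^ 2 * ((x - β) * (α - x)) ≤ (x ^ 2 - β ^ 2) * (α ^ 2 - x ^ 2) := by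
    have hsum : 4 * β ^ 2 ≤ (x + β) * (α + x) := by nlinarith [hx.1, hx.2]
    have hprod : 0 ≤ (x - β) * (α - x) := mul_nonneg (sub_nonneg.2 hx.1) (sub_nonneg.2 hx.2)
    nlinarith [mul_le_mul_of_nonneg_right hsum hprod]
  have hden : 0 < (α ^ 2 - β ^ 2) ^ 2 := by have := sub_pos.2 hsq; positivity
  rw [Qfun_eq_QfunSq hx0.le]
  calc _ = QfunSq p a (((β + α) / 2) ^ 2) / (α ^ 2 - β ^ 2) ^ 2
          * (4 * β ^ 2 * ((x - β) * (α - x))) := by ring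
    _ ≤ QfunSq p a (((β + α) / 2) ^ 2) / (α ^ 2 - β ^ 2) ^ 2
          * ((x ^ 2 - β ^ 2) * (α ^ 2 - x ^ 2)) := by gcongr
    _ ≤ QfunSq p a (x ^ 2) := by
        rw [div_mul_eq_mul_div, div_le_iff₀ hden]; linarith

lemma continuousOn_Qfun (p a : ℝ) : ContinuousOn (Qfun p a) (Ioi 0) := by
  unfold Qfun
  exact ((continuousOn_const.mul (continuousOn_id.rpow_const fun x hx => Or.inl hx.ne')).sub
    (by fun_prop)).sub continuousOn_const

lemma hasDerivAt_Qfun (p a : ℝ) {x : ℝ} (hx : 0 < x) :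
    HasDerivAt (Qfun p a)
      (a * (2 * (1 - p) * x ^ (2 * (1 - p) - 1)) - (1 - p) ^ 2 * (2 * x)) x := by
  have hpow : HasDerivAt (fun y : ℝ => y ^ 2) (2 * x) x := by simpa using hasDerivAt_pow 2 x
  exact (((hasDerivAt_rpow_const (Or.inl hx.ne')).const_mul a).sub
    (hpow.const_mul ((1 - p) ^ 2))).sub_const (p ^ 2)

lemma hasDerivAt_rpow_mul_sqrt_Qfun (p a t : ℝ) {x : ℝ} (hx : 0 < x) (hQ : 0 < Qfun p a x) :
    HasDerivAt (fun y => y ^ t * √(Qfun p a y))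
      (a * (1 + t - p) * (x ^ (1 + t - 2 * p) / √(Qfun p a x))
        - (1 - p) ^ 2 * (1 + t) * (x ^ (1 + t) / √(Qfun p a x))
        - t * p ^ 2 * (x ^ (t - 1) / √(Qfun p a x))) x := by
  refine ((hasDerivAt_rpow_const (p := t) (Or.inl hx.ne')).mul
    ((hasDerivAt_Qfun p a hx).sqrt hQ.ne')).congr_deriv ?_
  have hS : √(Qfun p a x) ^ 2 = a * x ^ (2 * (1 - p)) - (1 - p) ^ 2 * x ^ 2 - p ^ 2 :=
    sq_sqrt hQ.le
  have hpow (r s : ℝ) : x ^ (r + s) = x ^ r * x ^ s := rpow_add hx r s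
  have h₁ : x ^ t = x ^ (t - 1) * x := by rw [← rpow_add_one hx.ne']; ring_nf
  have h₂ : x ^ (1 + t) = x ^ (t - 1) * x ^ 2 := by
    rw [← rpow_two, ← hpow]; ring_nf
  have h₃ : x ^ (1 + t - 2 * p) = x ^ (t - 1) * x ^ (2 * (1 - p)) := by rw [← hpow]; ring_nf
  have h₄ : x ^ (2 * (1 - p)) = x ^ (2 * (1 - p) - 1) * x := by
    rw [← rpow_add_one hx.ne']; ring_nf
  rw [h₁, h₂, h₃]
  field_simp
  linear_combination t * hS - (1 - p) * a * h₄

/-- Integration-by-parts identity between the improper integrals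
`∫_β^α x^s/√(Q_{p,a}(x)) dx`, where `β < α` are the two positive roots of `Q_{p,a}`:
for every `t ∈ ℝ`,
`(1−p)²(1+t)·∫ x^(1+t)/√Q = a(1+t−p)·∫ x^(1+t−2p)/√Q − t·p²·∫ x^(t−1)/√Q`,
all three integrals converging. -/
theorem Qfun_integration_by_parts (p a t : ℝ) (hp : p ∈ Set.Ioo (0 : ℝ) 1)
    (ha : p ^ p * (1 - p) ^ (1 - p) < a)
    (β α : ℝ) (hβ : 0 < β) (hβα : β < α)
    (hQβ : Qfun p a β = 0) (hQα : Qfun p a α = 0)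
    (hQpos : ∀ x ∈ Set.Ioo β α, 0 < Qfun p a x) :
    IntervalIntegrable (fun x => x ^ (1 + t) / Real.sqrt (Qfun p a x)) volume β α ∧
    IntervalIntegrable (fun x => x ^ (1 + t - 2 * p) / Real.sqrt (Qfun p a x)) volume β α ∧
    IntervalIntegrable (fun x => x ^ (t - 1) / Real.sqrt (Qfun p a x)) volume β α ∧
    (1 - p) ^ 2 * (1 + t) * ∫ x in β..α, x ^ (1 + t) / Real.sqrt (Qfun p a x)
      = a * (1 + t - p) * (∫ x in β..α, x ^ (1 + t - 2 * p) / Real.sqrt (Qfun p a x))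
        - t * p ^ 2 * ∫ x in β..α, x ^ (t - 1) / Real.sqrt (Qfun p a x) := by
  obtain ⟨hp0, hp1⟩ := hp
  have ha0 : 0 ≤ a :=
    (mul_nonneg (rpow_nonneg hp0.le p) (rpow_nonneg (sub_nonneg.2 hp1.le) (1 - p))).trans ha.le
  obtain ⟨C, hC, hbound⟩ := exists_pos_mul_le_Qfun ⟨hp0.le, hp1.le⟩ ha0 hβ hβα hQβ.ge hQα.ge
    (hQpos _ ⟨by linarith, by linarith⟩)
  have hpos : Icc β α ⊆ Ioi 0 := fun x hx => hβ.trans_le hx.1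
  have hrpow (s : ℝ) : ContinuousOn (fun x : ℝ => x ^ s) (Icc β α) :=
    continuousOn_id.rpow_const fun x hx => Or.inl (hpos hx).ne'
  have hint (s : ℝ) : IntervalIntegrable (fun x => x ^ s / √(Qfun p a x)) volume β α :=
    intervalIntegrable_div_sqrt_of_mul_le hβα.le hC (hrpow s)
      ((continuousOn_Qfun p a).mono (Ioo_subset_Icc_self.trans hpos))
      fun x hx => hbound x (Ioo_subset_Icc_self hx)
  refine ⟨hint _, hint _, hint _, ?_⟩
  have hFTC := integral_eq_sub_of_hasDerivAt_of_le (f := fun x => x ^ t * √(Qfun p a x))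
    hβα.le
    ((hrpow t).mul (continuous_sqrt.comp_continuousOn ((continuousOn_Qfun p a).mono hpos)))
    (fun x hx => hasDerivAt_rpow_mul_sqrt_Qfun p a t (hβ.trans hx.1) (hQpos x hx))
    ((((hint _).const_mul _).sub ((hint _).const_mul _)).sub ((hint _).const_mul _))
  rw [integral_sub (((hint _).const_mul _).sub ((hint _).const_mul _)) ((hint _).const_mul _),
    integral_sub ((hint _).const_mul _) ((hint _).const_mul _),
    intervalIntegral.integral_const_mul, intervalIntegral.integral_const_mul,
    intervalIntegral.integral_const_mul] at hFTC
  simp only [hQα, hQβ, sqrt_zero, mul_zero, sub_zero] at hFTC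
  linarith
end
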